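/- Let G, H, K be finite groups, X ≤ G×H and Y' ≤ Y ≤ H×K subgroups, M a left 𝕜X-module and N' a left 𝕜Y'-module. There is a 𝕜[X*Y]-module homomorphism α₂ : Ind_{X*Y'}^{X*Y}(M ⊗^{X,Y'}_{𝕜H} N') → M ⊗^{X,Y}_{𝕜H} Ind_{Y'}^{Y}(N') sending (g,k)⊗(m⊗n') to (g,h)m ⊗ ((h,k)⊗n'), for (g,k) ∈ X*Y, m ∈ M, n' ∈ N', where h ∈ H is chosen with (g,h) ∈ X and (h,k) ∈ Y; α₂ is natural in M and N', and if p₁(Y) ≤ p₂(X) then α₂ is an isomorphism. -/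

import Mathlib

/-!
On generators, `α₂` picks a middle element `h` with `(g,h) ∈ X` and `(h,k) ∈ Y`. Two choices of `h`
differ by an element of `k₂(X) ∩ k₁(Y)`, which the balanced tensor product absorbs, and a
translation by `X*Y'` on the right passes through the relations of `Ind_{Y'}^{Y}(N')`; so `α₂`
descends to both quotients. When `p₁(Y) ≤ p₂(X)`, every `(h,k) ∈ Y` lifts to some `(g,h) ∈ X`,
and `m ⊗ ((h,k) ⊗ n') ↦ (g,k) ⊗ ((g,h)⁻¹m ⊗ n')` is a well-defined inverse, again independent of
the lift.
-/

namespace Stmt10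

/-- `k₁(X) = {g ∈ G ∣ (g,1) ∈ X}`. -/
def k1 {G H : Type*} [Group G] [Group H] (X : Subgroup (G × H)) : Subgroup G :=
  X.comap (MonoidHom.inl G H)

/-- `k₂(X) = {h ∈ H ∣ (1,h) ∈ X}`. -/
def k2 {G H : Type*} [Group G] [Group H] (X : Subgroup (G × H)) : Subgroup H :=
  X.comap (MonoidHom.inr G H)

/-- `p₁(X)`, the image of `X` under the first projection. -/
def p1 {G H : Type*} [Group G] [Group H] (X : Subgroup (G × H)) : Subgroup G :=
  X.map (MonoidHom.fst G H)

/-- `p₂(X)`, the image of `X` under the second projection. -/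
def p2 {G H : Type*} [Group G] [Group H] (X : Subgroup (G × H)) : Subgroup H :=
  X.map (MonoidHom.snd G H)

/-- The opposite subgroup `X° = {(h,g) ∣ (g,h) ∈ X}`. -/
def opp {G H : Type*} [Group G] [Group H] (X : Subgroup (G × H)) : Subgroup (H × G) :=
  X.map ((MulEquiv.prodComm : (G × H) ≃* (H × G)).toMonoidHom)

/-- The composition `X*Y` of subgroup correspondences. -/
def comp {G H K : Type*} [Group G] [Group H] [Group K]
    (X : Subgroup (G × H)) (Y : Subgroup (H × K)) : Subgroup (G × K) where
  carrier := {gk | ∃ h : H, (gk.1, h) ∈ X ∧ (h, gk.2) ∈ Y}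
  one_mem' := ⟨1, X.one_mem, Y.one_mem⟩
  mul_mem' := by
    rintro ⟨g, k⟩ ⟨g', k'⟩ ⟨h, hX, hY⟩ ⟨h', hX', hY'⟩
    exact ⟨h * h', X.mul_mem hX hX', Y.mul_mem hY hY'⟩
  inv_mem' := by
    rintro ⟨g, k⟩ ⟨h, hX, hY⟩
    exact ⟨h⁻¹, X.inv_mem hX, Y.inv_mem hY⟩

lemma mem_comp {G H K : Type*} [Group G] [Group H] [Group K]
    {X : Subgroup (G × H)} {Y : Subgroup (H × K)} {x : G × K} :
    x ∈ comp X Y ↔ ∃ h : H, (x.1, h) ∈ X ∧ (h, x.2) ∈ Y := Iff.rfl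

lemma mem_opp {G H : Type*} [Group G] [Group H] {X : Subgroup (G × H)} {x : H × G} :
    x ∈ opp X ↔ (x.2, x.1) ∈ X := by
  rw [opp, Subgroup.mem_map]
  constructor
  · rintro ⟨⟨g, h⟩, hgh, rfl⟩
    simpa using hgh
  · intro hx
    exact ⟨(x.2, x.1), hx, rfl⟩

/-- The diagonal subgroup `Δ(P) = {(g,g) ∣ g ∈ P} ≤ G × G`. -/
def diag {G : Type*} [Group G] (P : Subgroup G) : Subgroup (G × G) :=
  (P.subtype.prod P.subtype).range

/-- The twisted diagonal subgroup `Δ(P,φ,Q) = {(φ y, y) ∣ y ∈ Q} ≤ G × H`. -/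
def tdiag {G H : Type*} [Group G] [Group H] (P : Subgroup G) (Q : Subgroup H)
    (φ : Q ≃* P) : Subgroup (G × H) :=
  ((P.subtype.comp φ.toMonoidHom).prod Q.subtype).range

open scoped TensorProduct

section ExtendedTensor

variable {𝕜 : Type*} [CommRing 𝕜]

/-- The submodule of relations defining the balanced tensor product
`M ⊗_{𝕜[k₂(X)∩k₁(Y)]} N` over the middle group: it is spanned by the elements
`(m·b) ⊗ n - m ⊗ (b·n)` with `b ∈ k₂(X)∩k₁(Y)`, where `m·b = (1,b⁻¹)·m` and
`b·n = (b,1)·n`. -/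
def midRel {A B C : Type*} [Group A] [Group B] [Group C]
    {M N : Type*} [AddCommGroup M] [Module 𝕜 M] [AddCommGroup N] [Module 𝕜 N]
    (X : Subgroup (A × B)) (Y : Subgroup (B × C))
    (ρ : Representation 𝕜 ↥X M) (σ : Representation 𝕜 ↥Y N) :
    Submodule 𝕜 (M ⊗[𝕜] N) :=
  Submodule.span 𝕜 {z | ∃ (b : B) (h1 : (((1 : A), b⁻¹) : A × B) ∈ X)
    (h2 : ((b, (1 : C)) : B × C) ∈ Y) (m : M) (n : N),
      z = (ρ ⟨((1 : A), b⁻¹), h1⟩ m) ⊗ₜ[𝕜] n - m ⊗ₜ[𝕜] (σ ⟨(b, (1 : C)), h2⟩ n)}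

/-- The underlying `𝕜`-module of the extended tensor product `M ⊗^{X,Y}_{𝕜B} N`. -/
abbrev ExtTen {A B C : Type*} [Group A] [Group B] [Group C]
    {M N : Type*} [AddCommGroup M] [Module 𝕜 M] [AddCommGroup N] [Module 𝕜 N]
    (X : Subgroup (A × B)) (Y : Subgroup (B × C))
    (ρ : Representation 𝕜 ↥X M) (σ : Representation 𝕜 ↥Y N) :=
  (M ⊗[𝕜] N) ⧸ midRel X Y ρ σ

/-- The canonical projection onto the extended tensor product. -/
def extMk {A B C : Type*} [Group A] [Group B] [Group C]
    {M N : Type*} [AddCommGroup M] [Module 𝕜 M] [AddCommGroup N] [Module 𝕜 N]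
    (X : Subgroup (A × B)) (Y : Subgroup (B × C))
    (ρ : Representation 𝕜 ↥X M) (σ : Representation 𝕜 ↥Y N) :
    (M ⊗[𝕜] N) →ₗ[𝕜] ExtTen X Y ρ σ :=
  (midRel X Y ρ σ).mkQ

/-- The `𝕜`-module `LHom^{X,Y}_{𝕜A}(M,N) = Hom_{𝕜[k₁(X)∩k₁(Y)]}(M,N)` of
`𝕜`-linear maps commuting with the actions of `k₁(X)∩k₁(Y)` (via `(a,1)`). -/
def lHomSub {A B C : Type*} [Group A] [Group B] [Group C]
    {M N : Type*} [AddCommGroup M] [Module 𝕜 M] [AddCommGroup N] [Module 𝕜 N]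
    (X : Subgroup (A × B)) (Y : Subgroup (A × C))
    (ρ : Representation 𝕜 ↥X M) (σ : Representation 𝕜 ↥Y N) :
    Submodule 𝕜 (M →ₗ[𝕜] N) where
  carrier := {f | ∀ (a : A) (h1 : ((a, (1 : B)) : A × B) ∈ X)
      (h2 : ((a, (1 : C)) : A × C) ∈ Y) (m : M),
        f (ρ ⟨(a, 1), h1⟩ m) = σ ⟨(a, 1), h2⟩ (f m)}
  add_mem' := by
    intro f g hf hg a h1 h2 m
    simp only [LinearMap.add_apply, hf a h1 h2 m, hg a h1 h2 m, map_add]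
  zero_mem' := by
    intro a h1 h2 m
    simp
  smul_mem' := by
    intro c f hf a h1 h2 m
    simp only [LinearMap.smul_apply, hf a h1 h2 m, map_smul]

/-- The `𝕜`-module `RHom^{X,Y}_{𝕜A}(M,N) = Hom_{𝕜[k₂(X)∩k₂(Y)]}(M,N)` of
`𝕜`-linear maps commuting with the actions of `k₂(X)∩k₂(Y)` (via `(1,a)`). -/
def rHomSub {A B C : Type*} [Group A] [Group B] [Group C]
    {M N : Type*} [AddCommGroup M] [Module 𝕜 M] [AddCommGroup N] [Module 𝕜 N]
    (X : Subgroup (B × A)) (Y : Subgroup (C × A))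
    (ρ : Representation 𝕜 ↥X M) (σ : Representation 𝕜 ↥Y N) :
    Submodule 𝕜 (M →ₗ[𝕜] N) where
  carrier := {f | ∀ (a : A) (h1 : (((1 : B), a) : B × A) ∈ X)
      (h2 : (((1 : C), a) : C × A) ∈ Y) (m : M),
        f (ρ ⟨(1, a), h1⟩ m) = σ ⟨(1, a), h2⟩ (f m)}
  add_mem' := by
    intro f g hf hg a h1 h2 m
    simp only [LinearMap.add_apply, hf a h1 h2 m, hg a h1 h2 m, map_add]
  zero_mem' := by
    intro a h1 h2 m
    simp
  smul_mem' := by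
    intro c f hf a h1 h2 m
    simp only [LinearMap.smul_apply, hf a h1 h2 m, map_smul]

/-- The `𝕜`-module of `𝕜I`-linear maps between two representations of a group
`I`, e.g. `Hom_{𝕜[X*X°]}(-,-)` or `Hom_{𝕜X}(-,-)`. -/
def fullHomSub {I : Type*} [Group I]
    {M N : Type*} [AddCommGroup M] [Module 𝕜 M] [AddCommGroup N] [Module 𝕜 N]
    (ρ : Representation 𝕜 I M) (σ : Representation 𝕜 I N) :
    Submodule 𝕜 (M →ₗ[𝕜] N) where
  carrier := {f | ∀ (x : I) (m : M), f (ρ x m) = σ x (f m)}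
  add_mem' := by
    intro f g hf hg x m
    simp only [LinearMap.add_apply, hf x m, hg x m, map_add]
  zero_mem' := by
    intro x m
    simp
  smul_mem' := by
    intro c f hf x m
    simp only [LinearMap.smul_apply, hf x m, map_smul]

/-- Relations defining the induced module `Ind_{X'}^{X}(M') = 𝕜X ⊗_{𝕜X'} M'`:
spanned by `(b·a) ⊗ m - b ⊗ (a·m)` for `a ∈ X'`, `b ∈ X`. -/
noncomputable def indRel {I : Type*} [Group I] (X' X : Subgroup I)
    {M' : Type*} [AddCommGroup M'] [Module 𝕜 M']
    (ρ' : Representation 𝕜 ↥X' M') :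
    Submodule 𝕜 (MonoidAlgebra 𝕜 ↥X ⊗[𝕜] M') :=
  Submodule.span 𝕜 {z | ∃ (b : ↥X) (a : I) (h1 : a ∈ X') (h2 : a ∈ X) (m : M'),
    z = (MonoidAlgebra.single (b * ⟨a, h2⟩) (1 : 𝕜)) ⊗ₜ[𝕜] m -
        (MonoidAlgebra.single b (1 : 𝕜)) ⊗ₜ[𝕜] (ρ' ⟨a, h1⟩ m)}

/-- The underlying `𝕜`-module of the induced module `Ind_{X'}^{X}(M')`. -/
abbrev Ind {I : Type*} [Group I] (X' X : Subgroup I)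
    {M' : Type*} [AddCommGroup M'] [Module 𝕜 M']
    (ρ' : Representation 𝕜 ↥X' M') :=
  (MonoidAlgebra 𝕜 ↥X ⊗[𝕜] M') ⧸ indRel X' X ρ'

/-- The canonical projection onto the induced module. -/
noncomputable def indMk {I : Type*} [Group I] (X' X : Subgroup I)
    {M' : Type*} [AddCommGroup M'] [Module 𝕜 M']
    (ρ' : Representation 𝕜 ↥X' M') :
    (MonoidAlgebra 𝕜 ↥X ⊗[𝕜] M') →ₗ[𝕜] Ind X' X ρ' :=
  (indRel X' X ρ').mkQ

end ExtendedTensor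

section Homs

variable {G H : Type*} [Group G] [Group H]

lemma k1_prod_mem {X : Subgroup (G × H)} (u : ↥(k1 X)) :
    (((u : G), (1 : H)) : G × H) ∈ X := u.2

lemma k1_inv_prod_mem {X : Subgroup (G × H)} (u : ↥(k1 X)) :
    (((u : G)⁻¹, (1 : H)) : G × H) ∈ X := by
  simpa using X.inv_mem (k1_prod_mem u)

lemma k2_prod_mem {X : Subgroup (G × H)} (u : ↥(k2 X)) :
    (((1 : G), (u : H)) : G × H) ∈ X := u.2

/-- The embedding `k₁(X) →* X`, `u ↦ (u,1)`. -/
def k1Hom (X : Subgroup (G × H)) : ↥(k1 X) →* ↥X where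
  toFun u := ⟨((u : G), (1 : H)), u.2⟩
  map_one' := rfl
  map_mul' u v := Subtype.ext (by simp)

/-- The embedding `k₁(X) →* X°`, `u ↦ (1,u)`, giving the right `𝕜[k₁(X)]`-module
structure (read as a left module) on left `𝕜X°`-modules. -/
def k1HomOp (X : Subgroup (G × H)) : ↥(k1 X) →* ↥(opp X) where
  toFun u := ⟨((1 : H), (u : G)), mem_opp.mpr u.2⟩
  map_one' := rfl
  map_mul' u v := Subtype.ext (by simp)

/-- The embedding `k₂(X) →* X`, `u ↦ (1,u)`. -/
def k2Hom (X : Subgroup (G × H)) : ↥(k2 X) →* ↥X where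
  toFun u := ⟨((1 : G), (u : H)), u.2⟩
  map_one' := rfl
  map_mul' u v := Subtype.ext (by simp)

end Homs

open MonoidAlgebra

section Representation

variable {𝕜 I V : Type*} [CommRing 𝕜] [Group I] [AddCommGroup V] [Module 𝕜 V] {S : Subgroup I}

lemma rep_mk_mul_apply (ρ : Representation 𝕜 ↥S V) {a b c : I} (ha : a ∈ S) (hb : b ∈ S)
    (hc : c ∈ S) (habc : a * b = c) (v : V) :
    ρ ⟨a, ha⟩ (ρ ⟨b, hb⟩ v) = ρ ⟨c, hc⟩ v := by
  subst habc
  rw [← Module.End.mul_apply, ← map_mul]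
  rfl

lemma rep_mk_one_apply (ρ : Representation 𝕜 ↥S V) {a : I} (ha : a ∈ S) (h1 : a = 1) (v : V) :
    ρ ⟨a, ha⟩ v = v := by
  subst h1
  exact congrArg (· v) (map_one ρ)

end Representation

section ExtTen

variable {𝕜 A B C M N P : Type*} [CommRing 𝕜] [Group A] [Group B] [Group C]
  [AddCommGroup M] [Module 𝕜 M] [AddCommGroup N] [Module 𝕜 N] [AddCommGroup P] [Module 𝕜 P]
  {X : Subgroup (A × B)} {Y : Subgroup (B × C)}
  {ρ : Representation 𝕜 ↥X M} {σ : Representation 𝕜 ↥Y N}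

lemma extMk_act_tmul {b : B} (h1 : ((1 : A), b⁻¹) ∈ X) (h2 : (b, (1 : C)) ∈ Y) (m : M) (n : N) :
    extMk X Y ρ σ (ρ ⟨(1, b⁻¹), h1⟩ m ⊗ₜ n) = extMk X Y ρ σ (m ⊗ₜ σ ⟨(b, 1), h2⟩ n) :=
  (Submodule.Quotient.eq _).mpr (Submodule.subset_span ⟨b, h1, h2, m, n, rfl⟩)

def ExtTen.lift (f : M →ₗ[𝕜] N →ₗ[𝕜] P)
    (hf : ∀ (b : B) (h1 : ((1 : A), b⁻¹) ∈ X) (h2 : (b, (1 : C)) ∈ Y) (m : M) (n : N),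
      f (ρ ⟨(1, b⁻¹), h1⟩ m) n = f m (σ ⟨(b, 1), h2⟩ n)) :
    ExtTen X Y ρ σ →ₗ[𝕜] P :=
  (midRel X Y ρ σ).liftQ (TensorProduct.lift f) <| Submodule.span_le.mpr <| by
    rintro _ ⟨b, h1, h2, m, n, rfl⟩
    rw [SetLike.mem_coe, LinearMap.mem_ker, map_sub, sub_eq_zero, TensorProduct.lift.tmul,
      TensorProduct.lift.tmul, hf]

@[simp]
lemma ExtTen.lift_extMk (f : M →ₗ[𝕜] N →ₗ[𝕜] P) (hf) (m : M) (n : N) :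
    ExtTen.lift f hf (extMk X Y ρ σ (m ⊗ₜ n)) = f m n :=
  TensorProduct.lift.tmul m n

lemma ExtTen.hom_ext {f g : ExtTen X Y ρ σ →ₗ[𝕜] P}
    (h : ∀ m, f ∘ₗ extMk X Y ρ σ ∘ₗ TensorProduct.mk 𝕜 M N m =
      g ∘ₗ extMk X Y ρ σ ∘ₗ TensorProduct.mk 𝕜 M N m) : f = g :=
  Submodule.linearMap_qext _ <| TensorProduct.ext <| LinearMap.ext h

end ExtTen

section Ind

variable {𝕜 I M' P : Type*} [CommRing 𝕜] [Group I] [AddCommGroup M'] [Module 𝕜 M']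
  [AddCommGroup P] [Module 𝕜 P] {X' X : Subgroup I} {ρ' : Representation 𝕜 ↥X' M'}

lemma indMk_single_tmul_act {b c : ↥X} {a : I} (ha : a ∈ X') (hc : (c : I) = b * a) (m : M') :
    indMk X' X ρ' (single c 1 ⊗ₜ m) = indMk X' X ρ' (single b 1 ⊗ₜ ρ' ⟨a, ha⟩ m) := by
  have ha' : a ∈ X := by
    rw [show a = (b : I)⁻¹ * c by rw [hc, inv_mul_cancel_left]]
    exact X.mul_mem (X.inv_mem b.2) c.2
  obtain rfl : c = b * ⟨a, ha'⟩ := Subtype.ext hc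
  exact (Submodule.Quotient.eq _).mpr (Submodule.subset_span ⟨b, a, ha, ha', m, rfl⟩)

noncomputable def Ind.lift (F : ↥X → M' →ₗ[𝕜] P)
    (hF : ∀ (b : ↥X) (a : I) (h1 : a ∈ X') (h2 : a ∈ X), F (b * ⟨a, h2⟩) = F b ∘ₗ ρ' ⟨a, h1⟩) :
    Ind X' X ρ' →ₗ[𝕜] P :=
  (indRel X' X ρ').liftQ (TensorProduct.lift ((basis ↥X 𝕜).constr 𝕜 F)) <|
    Submodule.span_le.mpr <| by
      rintro _ ⟨b, a, h1, h2, m, rfl⟩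
      rw [SetLike.mem_coe, LinearMap.mem_ker, map_sub, sub_eq_zero, TensorProduct.lift.tmul,
        TensorProduct.lift.tmul, ← basis_apply, ← basis_apply, Module.Basis.constr_basis,
        Module.Basis.constr_basis, hF, LinearMap.comp_apply]

@[simp]
lemma Ind.lift_indMk (F : ↥X → M' →ₗ[𝕜] P) (hF) (b : ↥X) (m : M') :
    Ind.lift F hF (indMk X' X ρ' (single b 1 ⊗ₜ m)) = F b m := by
  change TensorProduct.lift ((basis ↥X 𝕜).constr 𝕜 F) (single b 1 ⊗ₜ m) = F b m
  rw [TensorProduct.lift.tmul, ← basis_apply, Module.Basis.constr_basis]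

lemma Ind.hom_ext {f g : Ind X' X ρ' →ₗ[𝕜] P}
    (h : ∀ b, f ∘ₗ indMk X' X ρ' ∘ₗ TensorProduct.mk 𝕜 _ M' (single b 1) =
      g ∘ₗ indMk X' X ρ' ∘ₗ TensorProduct.mk 𝕜 _ M' (single b 1)) : f = g :=
  Submodule.linearMap_qext _ <| TensorProduct.ext <| (basis ↥X 𝕜).ext h

end Ind

section Comparison

variable {𝕜 G H K M N' : Type*} [CommRing 𝕜] [Group G] [Group H] [Group K]
  [AddCommGroup M] [Module 𝕜 M] [AddCommGroup N'] [Module 𝕜 N']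
  {X : Subgroup (G × H)} {Y' Y : Subgroup (H × K)}
  (ρM : Representation 𝕜 ↥X M) {ρN' : Representation 𝕜 ↥Y' N'}
  (ρI : Representation 𝕜 ↥Y (Ind Y' Y ρN'))
  {g g₀ : G} {h h' h₀ : H} {k k₀ : K}

noncomputable def alphaGen (h1 : (g, h) ∈ X) (h2 : (h, k) ∈ Y) :
    M →ₗ[𝕜] N' →ₗ[𝕜] ExtTen X Y ρM ρI :=
  ((TensorProduct.mk 𝕜 M _).compr₂ (extMk X Y ρM ρI) ∘ₗ ρM ⟨(g, h), h1⟩).compl₂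
    (indMk Y' Y ρN' ∘ₗ TensorProduct.mk 𝕜 _ N' (single ⟨(h, k), h2⟩ 1))

variable {ρM ρI}

lemma alphaGen_apply (h1 : (g, h) ∈ X) (h2 : (h, k) ∈ Y) (m : M) (n : N') :
    alphaGen ρM ρI h1 h2 m n =
      extMk X Y ρM ρI (ρM ⟨(g, h), h1⟩ m ⊗ₜ indMk Y' Y ρN' (single ⟨(h, k), h2⟩ 1 ⊗ₜ n)) :=
  rfl

variable (hρI : ∀ (y b : ↥Y) (n : N'),
  ρI y (indMk Y' Y ρN' (single b (1 : 𝕜) ⊗ₜ n)) = indMk Y' Y ρN' (single (y * b) 1 ⊗ₜ n))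

include hρI in
lemma act_indMk_single {a : H × K} (ha : a ∈ Y) {b c : ↥Y} (hc : a * b = c) (n : N') :
    ρI ⟨a, ha⟩ (indMk Y' Y ρN' (single b 1 ⊗ₜ n)) = indMk Y' Y ρN' (single c 1 ⊗ₜ n) := by
  rw [hρI, show ⟨a, ha⟩ * b = c from Subtype.ext hc]

include hρI in
lemma alphaGen_eq {g' : G} {k' : K} (hg : g = g') (hk : k = k') (h1 : (g, h) ∈ X)
    (h2 : (h, k) ∈ Y) (h1' : (g', h') ∈ X) (h2' : (h', k') ∈ Y) :
    alphaGen ρM ρI h1 h2 = alphaGen ρM ρI h1' h2' := by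
  subst hg hk
  have hb1 : ((1 : G), (h * h'⁻¹)⁻¹) ∈ X := by simpa using X.mul_mem h1' (X.inv_mem h1)
  have hb2 : (h * h'⁻¹, (1 : K)) ∈ Y := by simpa using Y.mul_mem h2 (Y.inv_mem h2')
  ext m n
  rw [alphaGen_apply, alphaGen_apply,
    ← act_indMk_single hρI hb2 (b := ⟨(h', k), h2'⟩) (by simp) n, ← extMk_act_tmul hb1,
    rep_mk_mul_apply _ _ _ h1' (by simp)]

lemma alphaGen_mul_right (h1 : (g, h) ∈ X) (h2 : (h, k) ∈ Y) (h1₀ : (g₀, h₀) ∈ X)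
    (h2₀ : (h₀, k₀) ∈ Y') (h1' : (g * g₀, h * h₀) ∈ X) (h2' : (h * h₀, k * k₀) ∈ Y)
    (m : M) (n : N') :
    alphaGen ρM ρI h1' h2' m n =
      alphaGen ρM ρI h1 h2 (ρM ⟨(g₀, h₀), h1₀⟩ m) (ρN' ⟨(h₀, k₀), h2₀⟩ n) := by
  rw [alphaGen_apply, alphaGen_apply, rep_mk_mul_apply _ h1 h1₀ h1' rfl,
    indMk_single_tmul_act (b := ⟨(h, k), h2⟩) h2₀ rfl]

variable (hY'Y : Y' ≤ Y)

include hρI hY'Y in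
lemma alphaGen_act_tmul (h1 : (g, h) ∈ X) (h2 : (h, k) ∈ Y) {b : H}
    (hb1 : ((1 : G), b⁻¹) ∈ X) (hb2 : (b, (1 : K)) ∈ Y') (m : M) (n : N') :
    alphaGen ρM ρI h1 h2 (ρM ⟨(1, b⁻¹), hb1⟩ m) n =
      alphaGen ρM ρI h1 h2 m (ρN' ⟨(b, 1), hb2⟩ n) := by
  have hb2' : (b⁻¹, (1 : K)⁻¹) ∈ Y' := Y'.inv_mem hb2
  calc alphaGen ρM ρI h1 h2 (ρM ⟨(1, b⁻¹), hb1⟩ m) n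
      = alphaGen ρM ρI h1 h2 (ρM ⟨(1, b⁻¹), hb1⟩ m)
          (ρN' ⟨(b⁻¹, 1⁻¹), hb2'⟩ (ρN' ⟨(b, 1), hb2⟩ n)) := by
        rw [rep_mk_mul_apply ρN' hb2' hb2 Y'.one_mem (by simp), rep_mk_one_apply ρN' _ rfl]
    _ = alphaGen ρM ρI (X.mul_mem h1 hb1 : (g * 1, h * b⁻¹) ∈ X)
          (Y.mul_mem h2 (hY'Y hb2') : (h * b⁻¹, k * 1⁻¹) ∈ Y) m (ρN' ⟨(b, 1), hb2⟩ n) :=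
        (alphaGen_mul_right h1 h2 hb1 hb2' _ _ m _).symm
    _ = alphaGen ρM ρI h1 h2 m (ρN' ⟨(b, 1), hb2⟩ n) := by
        rw [alphaGen_eq hρI (mul_one g) (by simp : k * 1⁻¹ = k)]

variable (ρM) in
noncomputable def alphaFam (b : ↥(comp X Y)) : ExtTen X Y' ρM ρN' →ₗ[𝕜] ExtTen X Y ρM ρI :=
  ExtTen.lift
    (alphaGen ρM ρI (mem_comp.mp b.2).choose_spec.1 (mem_comp.mp b.2).choose_spec.2)
    fun _ => alphaGen_act_tmul hρI hY'Y _ _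

lemma alphaFam_extMk (b : ↥(comp X Y)) (h1 : ((b : G × K).1, h) ∈ X)
    (h2 : (h, (b : G × K).2) ∈ Y) (m : M) (n : N') :
    alphaFam ρM hρI hY'Y b (extMk X Y' ρM ρN' (m ⊗ₜ n)) = alphaGen ρM ρI h1 h2 m n := by
  rw [alphaFam, ExtTen.lift_extMk, alphaGen_eq hρI rfl rfl]

variable {ρT₁ : Representation 𝕜 ↥(comp X Y') (ExtTen X Y' ρM ρN')}
  (hρT₁ : ∀ (g : G) (k : K) (hgk : (g, k) ∈ comp X Y') (h : H)
    (h1 : (g, h) ∈ X) (h2 : (h, k) ∈ Y') (m : M) (n : N'),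
    ρT₁ ⟨(g, k), hgk⟩ (extMk X Y' ρM ρN' (m ⊗ₜ n)) =
      extMk X Y' ρM ρN' (ρM ⟨(g, h), h1⟩ m ⊗ₜ ρN' ⟨(h, k), h2⟩ n))

include hρT₁ in
lemma alphaFam_mul (b : ↥(comp X Y)) (a : G × K) (ha' : a ∈ comp X Y') (ha : a ∈ comp X Y) :
    alphaFam ρM hρI hY'Y (b * ⟨a, ha⟩) = alphaFam ρM hρI hY'Y b ∘ₗ ρT₁ ⟨a, ha'⟩ := by
  obtain ⟨⟨g, k⟩, hb⟩ := b
  obtain ⟨g₀, k₀⟩ := a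
  obtain ⟨h, h1, h2⟩ := mem_comp.mp hb
  obtain ⟨h₀, h1₀, h2₀⟩ := mem_comp.mp ha'
  refine ExtTen.hom_ext fun m => LinearMap.ext fun n => ?_
  calc alphaFam ρM hρI hY'Y (⟨(g, k), hb⟩ * ⟨(g₀, k₀), ha⟩) (extMk X Y' ρM ρN' (m ⊗ₜ n))
      = alphaGen ρM ρI (X.mul_mem h1 h1₀ : (g * g₀, h * h₀) ∈ X)
          (Y.mul_mem h2 (hY'Y h2₀) : (h * h₀, k * k₀) ∈ Y) m n := alphaFam_extMk hρI hY'Y _ _ _ m n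
    _ = alphaGen ρM ρI h1 h2 (ρM ⟨(g₀, h₀), h1₀⟩ m) (ρN' ⟨(h₀, k₀), h2₀⟩ n) :=
        alphaGen_mul_right h1 h2 h1₀ h2₀ _ _ m n
    _ = alphaFam ρM hρI hY'Y ⟨(g, k), hb⟩ (ρT₁ ⟨(g₀, k₀), ha'⟩ (extMk X Y' ρM ρN' (m ⊗ₜ n))) := by
        rw [hρT₁ g₀ k₀ ha' h₀ h1₀ h2₀, alphaFam_extMk hρI hY'Y _ h1 h2]

noncomputable def alphaMap : Ind (comp X Y') (comp X Y) ρT₁ →ₗ[𝕜] ExtTen X Y ρM ρI :=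
  Ind.lift (alphaFam ρM hρI hY'Y) (alphaFam_mul hρI hY'Y hρT₁)

lemma alphaMap_indMk (b : ↥(comp X Y)) (h1 : ((b : G × K).1, h) ∈ X)
    (h2 : (h, (b : G × K).2) ∈ Y) (m : M) (n : N') :
    alphaMap hρI hY'Y hρT₁ (indMk _ _ ρT₁ (single b 1 ⊗ₜ extMk X Y' ρM ρN' (m ⊗ₜ n))) =
      alphaGen ρM ρI h1 h2 m n := by
  rw [alphaMap, Ind.lift_indMk, alphaFam_extMk hρI hY'Y b h1 h2]

variable {ρT₂ : Representation 𝕜 ↥(comp X Y) (ExtTen X Y ρM ρI)}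
  (hρT₂ : ∀ (g : G) (k : K) (hgk : (g, k) ∈ comp X Y) (h : H)
    (h1 : (g, h) ∈ X) (h2 : (h, k) ∈ Y) (m : M) (u : Ind Y' Y ρN'),
    ρT₂ ⟨(g, k), hgk⟩ (extMk X Y ρM ρI (m ⊗ₜ u)) =
      extMk X Y ρM ρI (ρM ⟨(g, h), h1⟩ m ⊗ₜ ρI ⟨(h, k), h2⟩ u))

include hρI hρT₂ in
lemma rep_alphaGen (hgk : (g, k) ∈ comp X Y) (h1 : (g, h) ∈ X) (h2 : (h, k) ∈ Y)
    (h1₀ : (g₀, h₀) ∈ X) (h2₀ : (h₀, k₀) ∈ Y) (h1' : (g * g₀, h * h₀) ∈ X)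
    (h2' : (h * h₀, k * k₀) ∈ Y) (m : M) (n : N') :
    ρT₂ ⟨(g, k), hgk⟩ (alphaGen ρM ρI h1₀ h2₀ m n) = alphaGen ρM ρI h1' h2' m n := by
  rw [alphaGen_apply, hρT₂ g k hgk h h1 h2, rep_mk_mul_apply _ h1 h1₀ h1' rfl,
    act_indMk_single hρI h2 (c := ⟨(h * h₀, k * k₀), h2'⟩) rfl, alphaGen_apply]

variable {ρS : Representation 𝕜 ↥(comp X Y) (Ind (comp X Y') (comp X Y) ρT₁)}
  (hρS : ∀ (x b : ↥(comp X Y)) (t : ExtTen X Y' ρM ρN'),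
    ρS x (indMk _ _ ρT₁ (single b (1 : 𝕜) ⊗ₜ t)) = indMk _ _ ρT₁ (single (x * b) 1 ⊗ₜ t))

include hρS hρT₂ in
lemma alphaMap_comp_rep (x : ↥(comp X Y)) :
    alphaMap hρI hY'Y hρT₁ ∘ₗ ρS x = ρT₂ x ∘ₗ alphaMap hρI hY'Y hρT₁ := by
  obtain ⟨⟨g, k⟩, hx⟩ := x
  obtain ⟨h, h1, h2⟩ := mem_comp.mp hx
  refine Ind.hom_ext fun b => ExtTen.hom_ext fun m => LinearMap.ext fun n => ?_
  obtain ⟨h₀, h1₀, h2₀⟩ := mem_comp.mp b.2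
  have h1' : (g * (b : G × K).1, h * h₀) ∈ X := X.mul_mem h1 h1₀
  have h2' : (h * h₀, k * (b : G × K).2) ∈ Y := Y.mul_mem h2 h2₀
  simp only [LinearMap.comp_apply, TensorProduct.mk_apply]
  rw [hρS, alphaMap_indMk hρI hY'Y hρT₁ _ h1' h2', alphaMap_indMk hρI hY'Y hρT₁ b h1₀ h2₀,
    rep_alphaGen hρI hρT₂ hx h1 h2 h1₀ h2₀ h1' h2']

lemma exists_mem_of_p1_le_p2 (hp : p1 Y ≤ p2 X) (hy : (h, k) ∈ Y) : ∃ g, (g, h) ∈ X := by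
  obtain ⟨⟨g, _⟩, hx, rfl⟩ := hp ⟨(h, k), hy, rfl⟩
  exact ⟨g, hx⟩

variable (ρT₁) in
noncomputable def betaGen (h1 : (g, h) ∈ X) (h2 : (h, k) ∈ Y) :
    M →ₗ[𝕜] N' →ₗ[𝕜] Ind (comp X Y') (comp X Y) ρT₁ :=
  (TensorProduct.mk 𝕜 M N' ∘ₗ ρM ⟨(g, h)⁻¹, X.inv_mem h1⟩).compr₂
    (indMk _ _ ρT₁ ∘ₗ TensorProduct.mk 𝕜 _ _ (single ⟨(g, k), mem_comp.mpr ⟨h, h1, h2⟩⟩ 1) ∘ₗ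
      extMk X Y' ρM ρN')

lemma betaGen_apply (h1 : (g, h) ∈ X) (h2 : (h, k) ∈ Y) (m : M) (n : N') :
    betaGen ρT₁ h1 h2 m n =
      indMk _ _ ρT₁ (single ⟨(g, k), mem_comp.mpr ⟨h, h1, h2⟩⟩ 1 ⊗ₜ
        extMk X Y' ρM ρN' (ρM ⟨(g, h)⁻¹, X.inv_mem h1⟩ m ⊗ₜ n)) :=
  rfl

lemma betaGen_congr {g' : G} {h' : H} {k' : K} (hg : g = g') (hh : h = h') (hk : k = k')
    (h1 : (g, h) ∈ X) (h2 : (h, k) ∈ Y) (h1' : (g', h') ∈ X) (h2' : (h', k') ∈ Y) :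
    betaGen ρT₁ h1 h2 = betaGen ρT₁ h1' h2' := by
  subst hg hh hk
  rfl

include hρT₁ in
lemma betaGen_mul_right (h1 : (g, h) ∈ X) (h2 : (h, k) ∈ Y) (h1₀ : (g₀, h₀) ∈ X)
    (h2₀ : (h₀, k₀) ∈ Y') (h1' : (g * g₀, h * h₀) ∈ X) (h2' : (h * h₀, k * k₀) ∈ Y)
    (m : M) (n : N') :
    betaGen ρT₁ h1' h2' m n = betaGen ρT₁ h1 h2 m (ρN' ⟨(h₀, k₀), h2₀⟩ n) := by
  rw [betaGen_apply, betaGen_apply,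
    indMk_single_tmul_act (b := ⟨(g, k), mem_comp.mpr ⟨h, h1, h2⟩⟩)
      (mem_comp.mpr ⟨h₀, h1₀, h2₀⟩ : (g₀, k₀) ∈ comp X Y') rfl,
    hρT₁ g₀ k₀ _ h₀ h1₀ h2₀, rep_mk_mul_apply _ _ _ (X.inv_mem h1) (by simp [mul_inv_rev])]

include hρT₁ in
lemma betaGen_eq {g' : G} (h1 : (g, h) ∈ X) (h1' : (g', h) ∈ X) (h2 : (h, k) ∈ Y) :
    betaGen ρT₁ h1 h2 = betaGen ρT₁ h1' h2 := by
  -- changing `g` is a right translation by `(g⁻¹g', 1) ∈ X`, with trivial `Y'`-component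
  have hd : (g⁻¹ * g', (1 : H)) ∈ X := by simpa using X.mul_mem (X.inv_mem h1) h1'
  refine LinearMap.ext fun m => LinearMap.ext fun n => ?_
  rw [betaGen_congr (mul_inv_cancel_left g g').symm (mul_one h).symm (mul_one k).symm h1' h2
      (by simpa using h1') (by simpa using h2),
    betaGen_mul_right hρT₁ h1 h2 hd Y'.one_mem, rep_mk_one_apply _ _ Prod.mk_one_one]

lemma betaGen_act_left (h1 : (g, h) ∈ X) (h2 : (h, k) ∈ Y) {b : H} (hb1 : ((1 : G), b⁻¹) ∈ X)
    (h1' : (g, b * h) ∈ X) (h2' : (b * h, k) ∈ Y) (m : M) (n : N') :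
    betaGen ρT₁ h1 h2 (ρM ⟨(1, b⁻¹), hb1⟩ m) n = betaGen ρT₁ h1' h2' m n := by
  rw [betaGen_apply, betaGen_apply,
    rep_mk_mul_apply _ _ _ (X.inv_mem h1') (by simp [mul_inv_rev])]

variable (hp : p1 Y ≤ p2 X)

variable (ρT₁) in
noncomputable def betaFam (y : ↥Y) : N' →ₗ[𝕜] M →ₗ[𝕜] Ind (comp X Y') (comp X Y) ρT₁ :=
  (betaGen ρT₁ (exists_mem_of_p1_le_p2 hp y.2).choose_spec y.2).flip

include hρT₁ in
lemma betaFam_apply (y : ↥Y) (h1 : (g, (y : H × K).1) ∈ X) (n : N') (m : M) :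
    betaFam ρT₁ hp y n m = betaGen ρT₁ h1 y.2 m n := by
  rw [betaFam, LinearMap.flip_apply, betaGen_eq hρT₁ _ h1]

include hρT₁ in
lemma betaFam_mul (y : ↥Y) (a : H × K) (ha' : a ∈ Y') (ha : a ∈ Y) :
    betaFam ρT₁ hp (y * ⟨a, ha⟩) = betaFam ρT₁ hp y ∘ₗ ρN' ⟨a, ha'⟩ := by
  obtain ⟨⟨h, k⟩, hy⟩ := y
  obtain ⟨h₀, k₀⟩ := a
  obtain ⟨g, h1⟩ := exists_mem_of_p1_le_p2 hp hy
  obtain ⟨g₀, h1₀⟩ := exists_mem_of_p1_le_p2 hp ha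
  refine LinearMap.ext fun n => LinearMap.ext fun m => ?_
  calc betaFam ρT₁ hp (⟨(h, k), hy⟩ * ⟨(h₀, k₀), ha⟩) n m
      = betaGen ρT₁ (X.mul_mem h1 h1₀ : (g * g₀, h * h₀) ∈ X)
          (Y.mul_mem hy ha : (h * h₀, k * k₀) ∈ Y) m n := betaFam_apply hρT₁ hp _ _ n m
    _ = betaGen ρT₁ h1 hy m (ρN' ⟨(h₀, k₀), ha'⟩ n) := betaGen_mul_right hρT₁ h1 hy h1₀ ha' _ _ m n
    _ = betaFam ρT₁ hp ⟨(h, k), hy⟩ (ρN' ⟨(h₀, k₀), ha'⟩ n) m :=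
        (betaFam_apply hρT₁ hp ⟨(h, k), hy⟩ h1 _ m).symm

noncomputable def betaInd : Ind Y' Y ρN' →ₗ[𝕜] M →ₗ[𝕜] Ind (comp X Y') (comp X Y) ρT₁ :=
  Ind.lift (betaFam ρT₁ hp) (betaFam_mul hρT₁ hp)

include hρI in
lemma betaInd_flip_act {b : H} (hb1 : ((1 : G), b⁻¹) ∈ X) (hb2 : (b, (1 : K)) ∈ Y) (m : M) :
    (betaInd hρT₁ hp).flip (ρM ⟨(1, b⁻¹), hb1⟩ m) =
      (betaInd hρT₁ hp).flip m ∘ₗ ρI ⟨(b, 1), hb2⟩ := by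
  refine Ind.hom_ext fun ⟨⟨h, k⟩, hy⟩ => LinearMap.ext fun n => ?_
  obtain ⟨g, h1⟩ := exists_mem_of_p1_le_p2 hp hy
  have h1' : (g, b * h) ∈ X := by simpa using X.mul_mem (X.inv_mem hb1) h1
  have h2' : (b * h, 1 * k) ∈ Y := Y.mul_mem hb2 hy
  simp only [LinearMap.comp_apply, TensorProduct.mk_apply, LinearMap.flip_apply]
  rw [act_indMk_single hρI hb2 (c := ⟨(b * h, 1 * k), h2'⟩) rfl, betaInd, Ind.lift_indMk,
    Ind.lift_indMk, betaFam_apply hρT₁ hp _ h1, betaFam_apply hρT₁ hp _ h1',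
    betaGen_act_left h1 hy hb1 h1' (by simpa using h2'),
    betaGen_congr rfl rfl (one_mul k).symm]

noncomputable def betaMap : ExtTen X Y ρM ρI →ₗ[𝕜] Ind (comp X Y') (comp X Y) ρT₁ :=
  ExtTen.lift (betaInd hρT₁ hp).flip fun _ hb1 hb2 m =>
    LinearMap.congr_fun (betaInd_flip_act hρI hρT₁ hp hb1 hb2 m)

lemma betaMap_extMk (y : ↥Y) (h1 : (g, (y : H × K).1) ∈ X) (m : M) (n : N') :
    betaMap hρI hρT₁ hp (extMk X Y ρM ρI (m ⊗ₜ indMk Y' Y ρN' (single y 1 ⊗ₜ n))) =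
      betaGen ρT₁ h1 y.2 m n := by
  rw [betaMap, ExtTen.lift_extMk, LinearMap.flip_apply, betaInd, Ind.lift_indMk,
    betaFam_apply hρT₁ hp y h1]

lemma betaMap_comp_alphaMap :
    betaMap hρI hρT₁ hp ∘ₗ alphaMap hρI hY'Y hρT₁ = LinearMap.id := by
  refine Ind.hom_ext fun ⟨⟨g, k⟩, hb⟩ => ExtTen.hom_ext fun m => LinearMap.ext fun n => ?_
  obtain ⟨h, h1, h2⟩ := mem_comp.mp hb
  simp only [LinearMap.comp_apply, TensorProduct.mk_apply, LinearMap.id_apply]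
  rw [alphaMap_indMk hρI hY'Y hρT₁ _ h1 h2, alphaGen_apply,
    betaMap_extMk hρI hρT₁ hp ⟨(h, k), h2⟩ h1, betaGen_apply,
    rep_mk_mul_apply _ _ _ X.one_mem (inv_mul_cancel _), rep_mk_one_apply _ _ rfl]

lemma alphaMap_comp_betaMap :
    alphaMap hρI hY'Y hρT₁ ∘ₗ betaMap hρI hρT₁ hp = LinearMap.id := by
  refine ExtTen.hom_ext fun m => Ind.hom_ext fun ⟨⟨h, k⟩, hy⟩ => LinearMap.ext fun n => ?_
  obtain ⟨g, h1⟩ := exists_mem_of_p1_le_p2 hp hy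
  simp only [LinearMap.comp_apply, TensorProduct.mk_apply, LinearMap.id_apply]
  rw [betaMap_extMk hρI hρT₁ hp _ h1, betaGen_apply, alphaMap_indMk hρI hY'Y hρT₁ _ h1 hy,
    alphaGen_apply, rep_mk_mul_apply _ _ _ X.one_mem (mul_inv_cancel _),
    rep_mk_one_apply _ _ rfl]

include hp in
lemma alphaMap_bijective : Function.Bijective (alphaMap hρI hY'Y hρT₁) :=
  Function.bijective_iff_has_inverse.mpr ⟨betaMap hρI hρT₁ hp,
    LinearMap.congr_fun (betaMap_comp_alphaMap hρI hY'Y hρT₁ hp),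
    LinearMap.congr_fun (alphaMap_comp_betaMap hρI hY'Y hρT₁ hp)⟩

end Comparison

theorem stmt10_general {𝕜 : Type*} [CommRing 𝕜]
    {G H K : Type*} [Group G] [Group H] [Group K]
    (X : Subgroup (G × H)) (Y' Y : Subgroup (H × K)) (hY'Y : Y' ≤ Y)
    {M N' : Type*} [AddCommGroup M] [Module 𝕜 M] [AddCommGroup N'] [Module 𝕜 N']
    (ρM : Representation 𝕜 ↥X M) (ρN' : Representation 𝕜 ↥Y' N')
    -- the `𝕜[X*Y']`-module structure on `M ⊗^{X,Y'}_{𝕜H} N'`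
    (ρT₁ : Representation 𝕜 ↥(comp X Y') (ExtTen X Y' ρM ρN'))
    (hρT₁ : ∀ (g : G) (k : K) (hgk : (g, k) ∈ comp X Y') (h : H)
      (h1 : (g, h) ∈ X) (h2 : (h, k) ∈ Y') (m : M) (n : N'),
      ρT₁ ⟨(g, k), hgk⟩ (extMk X Y' ρM ρN' (m ⊗ₜ[𝕜] n)) =
        extMk X Y' ρM ρN' ((ρM ⟨(g, h), h1⟩ m) ⊗ₜ[𝕜] (ρN' ⟨(h, k), h2⟩ n)))
    -- the `𝕜[X*Y]`-module structure on `Ind_{X*Y'}^{X*Y}(M ⊗^{X,Y'} N')`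
    (ρS : Representation 𝕜 ↥(comp X Y) (Ind (comp X Y') (comp X Y) ρT₁))
    (hρS : ∀ (x b : ↥(comp X Y)) (t : ExtTen X Y' ρM ρN'),
      ρS x (indMk (comp X Y') (comp X Y) ρT₁ ((MonoidAlgebra.single b (1 : 𝕜)) ⊗ₜ[𝕜] t)) =
        indMk (comp X Y') (comp X Y) ρT₁ ((MonoidAlgebra.single (x * b) (1 : 𝕜)) ⊗ₜ[𝕜] t))
    -- the `𝕜Y`-module structure on `Ind_{Y'}^{Y}(N')`
    (ρI : Representation 𝕜 ↥Y (Ind Y' Y ρN'))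
    (hρI : ∀ (y b : ↥Y) (n : N'),
      ρI y (indMk Y' Y ρN' ((MonoidAlgebra.single b (1 : 𝕜)) ⊗ₜ[𝕜] n)) =
        indMk Y' Y ρN' ((MonoidAlgebra.single (y * b) (1 : 𝕜)) ⊗ₜ[𝕜] n))
    -- the `𝕜[X*Y]`-module structure on `M ⊗^{X,Y}_{𝕜H} Ind_{Y'}^{Y}(N')`
    (ρT₂ : Representation 𝕜 ↥(comp X Y) (ExtTen X Y ρM ρI))
    (hρT₂ : ∀ (g : G) (k : K) (hgk : (g, k) ∈ comp X Y) (h : H)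
      (h1 : (g, h) ∈ X) (h2 : (h, k) ∈ Y) (m : M) (u : Ind Y' Y ρN'),
      ρT₂ ⟨(g, k), hgk⟩ (extMk X Y ρM ρI (m ⊗ₜ[𝕜] u)) =
        extMk X Y ρM ρI ((ρM ⟨(g, h), h1⟩ m) ⊗ₜ[𝕜] (ρI ⟨(h, k), h2⟩ u))) :
    ∃ α : Ind (comp X Y') (comp X Y) ρT₁ →ₗ[𝕜] ExtTen X Y ρM ρI,
      (∀ (g : G) (k : K) (hgk : (g, k) ∈ comp X Y) (h : H)
        (h1 : (g, h) ∈ X) (h2 : (h, k) ∈ Y) (m : M) (n : N'),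
        α (indMk (comp X Y') (comp X Y) ρT₁
            ((MonoidAlgebra.single (⟨(g, k), hgk⟩ : ↥(comp X Y)) (1 : 𝕜)) ⊗ₜ[𝕜]
              (extMk X Y' ρM ρN' (m ⊗ₜ[𝕜] n)))) =
          extMk X Y ρM ρI
            ((ρM ⟨(g, h), h1⟩ m) ⊗ₜ[𝕜]
              (indMk Y' Y ρN' ((MonoidAlgebra.single (⟨(h, k), h2⟩ : ↥Y) (1 : 𝕜)) ⊗ₜ[𝕜] n)))) ∧
      (∀ (x : ↥(comp X Y)) (u : Ind (comp X Y') (comp X Y) ρT₁),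
        α (ρS x u) = ρT₂ x (α u)) ∧
      (p1 Y ≤ p2 X → Function.Bijective α) := by
  refine ⟨alphaMap hρI hY'Y hρT₁, fun _ _ _ _ h1 h2 _ _ => alphaMap_indMk hρI hY'Y hρT₁ _ h1 h2 _ _,
    fun x => LinearMap.congr_fun (alphaMap_comp_rep hρI hY'Y hρT₁ hρT₂ hρS x),
    fun hp => alphaMap_bijective hρI hY'Y hρT₁ hp⟩

/-- There is a natural `𝕜[X*Y]`-module homomorphism
`α₂ : Ind_{X*Y'}^{X*Y}(M ⊗^{X,Y'}_{𝕜H} N') → M ⊗^{X,Y}_{𝕜H} Ind_{Y'}^{Y}(N')`,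
`(g,k)⊗(m⊗n') ↦ (g,h)m ⊗ ((h,k)⊗n')`, and if `p₁(Y) ≤ p₂(X)` then `α₂` is an
isomorphism. -/
theorem stmt10 {𝕜 : Type*} [CommRing 𝕜]
    {G H K : Type*} [Group G] [Group H] [Group K] [Finite G] [Finite H] [Finite K]
    (X : Subgroup (G × H)) (Y' Y : Subgroup (H × K)) (hY'Y : Y' ≤ Y)
    {M N' : Type*} [AddCommGroup M] [Module 𝕜 M] [AddCommGroup N'] [Module 𝕜 N']
    (ρM : Representation 𝕜 ↥X M) (ρN' : Representation 𝕜 ↥Y' N')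
    -- the `𝕜[X*Y']`-module structure on `M ⊗^{X,Y'}_{𝕜H} N'`
    (ρT₁ : Representation 𝕜 ↥(comp X Y') (ExtTen X Y' ρM ρN'))
    (hρT₁ : ∀ (g : G) (k : K) (hgk : (g, k) ∈ comp X Y') (h : H)
      (h1 : (g, h) ∈ X) (h2 : (h, k) ∈ Y') (m : M) (n : N'),
      ρT₁ ⟨(g, k), hgk⟩ (extMk X Y' ρM ρN' (m ⊗ₜ[𝕜] n)) =
        extMk X Y' ρM ρN' ((ρM ⟨(g, h), h1⟩ m) ⊗ₜ[𝕜] (ρN' ⟨(h, k), h2⟩ n)))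
    -- the `𝕜[X*Y]`-module structure on `Ind_{X*Y'}^{X*Y}(M ⊗^{X,Y'} N')`
    (ρS : Representation 𝕜 ↥(comp X Y) (Ind (comp X Y') (comp X Y) ρT₁))
    (hρS : ∀ (x b : ↥(comp X Y)) (t : ExtTen X Y' ρM ρN'),
      ρS x (indMk (comp X Y') (comp X Y) ρT₁ ((MonoidAlgebra.single b (1 : 𝕜)) ⊗ₜ[𝕜] t)) =
        indMk (comp X Y') (comp X Y) ρT₁ ((MonoidAlgebra.single (x * b) (1 : 𝕜)) ⊗ₜ[𝕜] t))
    -- the `𝕜Y`-module structure on `Ind_{Y'}^{Y}(N')`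
    (ρI : Representation 𝕜 ↥Y (Ind Y' Y ρN'))
    (hρI : ∀ (y b : ↥Y) (n : N'),
      ρI y (indMk Y' Y ρN' ((MonoidAlgebra.single b (1 : 𝕜)) ⊗ₜ[𝕜] n)) =
        indMk Y' Y ρN' ((MonoidAlgebra.single (y * b) (1 : 𝕜)) ⊗ₜ[𝕜] n))
    -- the `𝕜[X*Y]`-module structure on `M ⊗^{X,Y}_{𝕜H} Ind_{Y'}^{Y}(N')`
    (ρT₂ : Representation 𝕜 ↥(comp X Y) (ExtTen X Y ρM ρI))
    (hρT₂ : ∀ (g : G) (k : K) (hgk : (g, k) ∈ comp X Y) (h : H)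
      (h1 : (g, h) ∈ X) (h2 : (h, k) ∈ Y) (m : M) (u : Ind Y' Y ρN'),
      ρT₂ ⟨(g, k), hgk⟩ (extMk X Y ρM ρI (m ⊗ₜ[𝕜] u)) =
        extMk X Y ρM ρI ((ρM ⟨(g, h), h1⟩ m) ⊗ₜ[𝕜] (ρI ⟨(h, k), h2⟩ u))) :
    ∃ α : Ind (comp X Y') (comp X Y) ρT₁ →ₗ[𝕜] ExtTen X Y ρM ρI,
      (∀ (g : G) (k : K) (hgk : (g, k) ∈ comp X Y) (h : H)
        (h1 : (g, h) ∈ X) (h2 : (h, k) ∈ Y) (m : M) (n : N'),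
        α (indMk (comp X Y') (comp X Y) ρT₁
            ((MonoidAlgebra.single (⟨(g, k), hgk⟩ : ↥(comp X Y)) (1 : 𝕜)) ⊗ₜ[𝕜]
              (extMk X Y' ρM ρN' (m ⊗ₜ[𝕜] n)))) =
          extMk X Y ρM ρI
            ((ρM ⟨(g, h), h1⟩ m) ⊗ₜ[𝕜]
              (indMk Y' Y ρN' ((MonoidAlgebra.single (⟨(h, k), h2⟩ : ↥Y) (1 : 𝕜)) ⊗ₜ[𝕜] n)))) ∧
      (∀ (x : ↥(comp X Y)) (u : Ind (comp X Y') (comp X Y) ρT₁),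
        α (ρS x u) = ρT₂ x (α u)) ∧
      (p1 Y ≤ p2 X → Function.Bijective α) :=
  stmt10_general X Y' Y hY'Y ρM ρN' ρT₁ hρT₁ ρS hρS ρI hρI ρT₂ hρT₂

end Stmt10
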